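/- The second derivative of log f satisfies (d²/dy²) log f_{X+Z}(y) = Var(X | X+Z = y) - 1 ≥ -1, where f_{X+Z} is the density of X+Z with Z standard normal independent of X, and X a bounded random variable. Consequently, if y₀ is a global maximum of f_{X+Z}, then for all y: log f_{X+Z}(y) ≥ log f_{X+Z}(y₀) - (1/2)(y - y₀)². -/

import Mathlib

open Real MeasureTheory

noncomputable def stdNormalPdf (t : ℝ) : ℝ := (Real.sqrt (2 * π))⁻¹ * Real.exp (-t ^ 2 / 2)

/-!
Write `f = ∫ φ(· - x) dP` and let `M`, `V` be the posterior mean and variance of `X` given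
`X + Z = y`. Differentiating under the integral, `φ'(t) = -t φ(t)` gives `(log f)' = M - y` and
`M' = V ≥ 0`. Hence `log f + y²/2` is convex, and at a maximiser `y₀` of `f` its tangent has
slope `M y₀ = y₀`; lying above that tangent is the quadratic lower bound.
-/

lemma stdNormalPdf_pos (t : ℝ) : 0 < stdNormalPdf t := by
  unfold stdNormalPdf
  positivity

lemma inv_sqrt_two_pi_le_one : (Real.sqrt (2 * π))⁻¹ ≤ 1 :=
  inv_le_one_of_one_le₀ <| Real.one_le_sqrt.2 (by nlinarith [Real.pi_gt_three])

lemma stdNormalPdf_le_one (t : ℝ) : stdNormalPdf t ≤ 1 := by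
  have hexp : Real.exp (-t ^ 2 / 2) ≤ 1 := Real.exp_le_one_iff.2 (by nlinarith [sq_nonneg t])
  calc stdNormalPdf t ≤ 1 * 1 :=
        mul_le_mul inv_sqrt_two_pi_le_one hexp (Real.exp_pos _).le zero_le_one
    _ = 1 := one_mul 1

lemma abs_mul_stdNormalPdf_le_one (t : ℝ) : |t| * stdNormalPdf t ≤ 1 := by
  have habs : |t| ≤ Real.exp (t ^ 2 / 2) := by
    nlinarith [Real.add_one_le_exp (t ^ 2 / 2), sq_abs t, sq_nonneg (|t| - 1)]
  have hexp : |t| * Real.exp (-t ^ 2 / 2) ≤ 1 := by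
    rw [neg_div, Real.exp_neg, ← div_eq_mul_inv, div_le_one (Real.exp_pos _)]
    exact habs
  calc |t| * stdNormalPdf t = (Real.sqrt (2 * π))⁻¹ * (|t| * Real.exp (-t ^ 2 / 2)) := by
        unfold stdNormalPdf; ring
    _ ≤ 1 * 1 := mul_le_mul inv_sqrt_two_pi_le_one hexp (by positivity) zero_le_one
    _ = 1 := one_mul 1

@[fun_prop]
lemma continuous_stdNormalPdf : Continuous stdNormalPdf := by
  unfold stdNormalPdf
  fun_prop

lemma hasDerivAt_stdNormalPdf (t : ℝ) : HasDerivAt stdNormalPdf (-t * stdNormalPdf t) t := by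
  have hquad : HasDerivAt (fun s : ℝ => -s ^ 2 / 2) (-t) t := by
    refine (((hasDerivAt_pow 2 t).neg).div_const 2).congr_deriv ?_
    simp only [Nat.cast_ofNat]
    ring
  refine ((hquad.exp).const_mul (Real.sqrt (2 * π))⁻¹).congr_deriv ?_
  simp only [stdNormalPdf]
  ring

/-- With `P` the law of `X`, `gaussConv P 1` is the density of `X + Z`, and
`gaussConv P w y / gaussConv P 1 y = E[w(X) | X + Z = y]`. -/
noncomputable def gaussConv (P : Measure ℝ) (w : ℝ → ℝ) (y : ℝ) : ℝ :=
  ∫ x, w x * stdNormalPdf (y - x) ∂P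

noncomputable def posteriorMean (P : Measure ℝ) (y : ℝ) : ℝ :=
  gaussConv P (fun x => x) y / gaussConv P 1 y

noncomputable def posteriorVar (P : Measure ℝ) (y : ℝ) : ℝ :=
  gaussConv P (· ^ 2) y / gaussConv P 1 y - posteriorMean P y ^ 2

lemma gaussConv_const_mul (P : Measure ℝ) (c : ℝ) (w : ℝ → ℝ) (y : ℝ) :
    gaussConv P (fun x => c * w x) y = c * gaussConv P w y := by
  simp only [gaussConv, mul_assoc, integral_const_mul]

section CompactSupport

variable {P : Measure ℝ} [IsFiniteMeasure P] {K : Set ℝ} (hK : IsCompact K)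
  (hsupp : ∀ᵐ x ∂P, x ∈ K)
include hK hsupp

lemma integrable_mul_stdNormalPdf_sub {w : ℝ → ℝ} (hw : Continuous w) (y : ℝ) :
    Integrable (fun x => w x * stdNormalPdf (y - x)) P := by
  obtain ⟨C, hC⟩ := hK.exists_bound_of_continuousOn hw.continuousOn
  refine Integrable.mono' (integrable_const C) (by fun_prop) ?_
  filter_upwards [hsupp] with x hx
  rw [norm_mul, Real.norm_of_nonneg (stdNormalPdf_pos _).le]
  simpa using mul_le_mul (hC x hx) (stdNormalPdf_le_one (y - x)) (stdNormalPdf_pos _).le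
    ((norm_nonneg _).trans (hC x hx))

lemma gaussConv_add {w₁ w₂ : ℝ → ℝ} (hw₁ : Continuous w₁) (hw₂ : Continuous w₂) (y : ℝ) :
    gaussConv P (fun x => w₁ x + w₂ x) y = gaussConv P w₁ y + gaussConv P w₂ y := by
  simp only [gaussConv, add_mul]
  exact integral_add (integrable_mul_stdNormalPdf_sub hK hsupp hw₁ y)
    (integrable_mul_stdNormalPdf_sub hK hsupp hw₂ y)

lemma gaussConv_sub {w₁ w₂ : ℝ → ℝ} (hw₁ : Continuous w₁) (hw₂ : Continuous w₂) (y : ℝ) :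
    gaussConv P (fun x => w₁ x - w₂ x) y = gaussConv P w₁ y - gaussConv P w₂ y := by
  simp only [gaussConv, sub_mul]
  exact integral_sub (integrable_mul_stdNormalPdf_sub hK hsupp hw₁ y)
    (integrable_mul_stdNormalPdf_sub hK hsupp hw₂ y)

lemma hasDerivAt_gaussConv {w : ℝ → ℝ} (hw : Continuous w) (y : ℝ) :
    HasDerivAt (gaussConv P w) (gaussConv P (fun x => x * w x) y - y * gaussConv P w y) y := by
  obtain ⟨C, hC⟩ := hK.exists_bound_of_continuousOn hw.continuousOn
  have hderiv := hasDerivAt_integral_of_dominated_loc_of_deriv_le (μ := P) (x₀ := y)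
    (F := fun u x => w x * stdNormalPdf (u - x))
    (F' := fun u x => w x * ((x - u) * stdNormalPdf (u - x)))
    (bound := fun _ => C) Filter.univ_mem
    (Filter.Eventually.of_forall fun u => by fun_prop)
    (integrable_mul_stdNormalPdf_sub hK hsupp hw y) (by fun_prop) ?bound
    (integrable_const C) ?diff
  case bound =>
    filter_upwards [hsupp] with x hx u _
    have hgauss : ‖(x - u) * stdNormalPdf (u - x)‖ ≤ 1 := by
      rw [norm_mul, Real.norm_of_nonneg (stdNormalPdf_pos _).le, Real.norm_eq_abs, abs_sub_comm]
      exact abs_mul_stdNormalPdf_le_one (u - x)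
    simpa using norm_mul_le_of_le (hC x hx) hgauss
  case diff =>
    refine Filter.Eventually.of_forall fun x u _ => ?_
    have hshift := (hasDerivAt_stdNormalPdf (u - x)).comp u ((hasDerivAt_id u).sub_const x)
    refine (hshift.const_mul (w x)).congr_deriv ?_
    ring
  refine hderiv.2.congr_deriv ?_
  rw [← gaussConv_const_mul, ← gaussConv_sub hK hsupp (by fun_prop) (by fun_prop)]
  exact integral_congr_ae (Filter.Eventually.of_forall fun x => by dsimp only; ring)

lemma gaussConv_one_pos [NeZero P] (y : ℝ) : 0 < gaussConv P 1 y := by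
  refine (integral_pos_iff_support_of_nonneg (fun x => ?_)
    (integrable_mul_stdNormalPdf_sub hK hsupp continuous_one y)).2 ?_
  · simpa using (stdNormalPdf_pos (y - x)).le
  · simpa [Function.support, (stdNormalPdf_pos _).ne'] using Measure.measure_univ_pos.2
      (NeZero.ne P)

lemma hasDerivAt_log_gaussConv_one [NeZero P] (y : ℝ) :
    HasDerivAt (fun t => Real.log (gaussConv P 1 t)) (posteriorMean P y - y) y := by
  have hpos := (gaussConv_one_pos hK hsupp (P := P) y).ne'
  refine ((hasDerivAt_gaussConv hK hsupp continuous_one y).log hpos).congr_deriv ?_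
  simp only [posteriorMean, Pi.one_apply, mul_one]
  field_simp

lemma hasDerivAt_posteriorMean [NeZero P] (y : ℝ) :
    HasDerivAt (posteriorMean P) (posteriorVar P y) y := by
  have hpos := (gaussConv_one_pos hK hsupp (P := P) y).ne'
  refine ((hasDerivAt_gaussConv hK hsupp continuous_id' y).div
    (hasDerivAt_gaussConv hK hsupp continuous_one y) hpos).congr_deriv ?_
  simp only [posteriorVar, posteriorMean, Pi.one_apply, mul_one, ← sq]
  field_simp
  ring

/-- The posterior variance is `gaussConv P (fun x => (x - M)²) y / gaussConv P 1 y`. -/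
lemma posteriorVar_nonneg [NeZero P] (y : ℝ) : 0 ≤ posteriorVar P y := by
  set M := posteriorMean P y
  have hpos := gaussConv_one_pos hK hsupp (P := P) y
  have hexpand : gaussConv P (fun x => (x - M) ^ 2) y = posteriorVar P y * gaussConv P 1 y := by
    have hsq : (fun x : ℝ => (x - M) ^ 2) =
        fun x => x ^ 2 - 2 * M * x + M ^ 2 * (1 : ℝ → ℝ) x := by
      funext x; simp only [Pi.one_apply]; ring
    rw [hsq, gaussConv_add hK hsupp (by fun_prop) (by fun_prop),
      gaussConv_sub hK hsupp (by fun_prop) (by fun_prop), gaussConv_const_mul,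
      gaussConv_const_mul]
    simp only [posteriorVar, M, posteriorMean]
    field_simp
    ring
  have hint : 0 ≤ gaussConv P (fun x => (x - M) ^ 2) y :=
    integral_nonneg fun x => mul_nonneg (sq_nonneg _) (stdNormalPdf_pos _).le
  exact nonneg_of_mul_nonneg_left (hexpand ▸ hint) hpos

lemma hasDerivAt_log_gaussConv_one_add_sq [NeZero P] (y : ℝ) :
    HasDerivAt (fun t => Real.log (gaussConv P 1 t) + t ^ 2 / 2) (posteriorMean P y) y := by
  refine ((hasDerivAt_log_gaussConv_one hK hsupp y).add
    ((hasDerivAt_pow 2 y).div_const 2)).congr_deriv ?_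
  simp only [Nat.cast_ofNat]
  ring

lemma convexOn_log_gaussConv_one_add_sq [NeZero P] :
    ConvexOn ℝ Set.univ (fun t => Real.log (gaussConv P 1 t) + t ^ 2 / 2) := by
  have hderiv := hasDerivAt_log_gaussConv_one_add_sq hK hsupp (P := P)
  have hmono : Monotone (posteriorMean P) :=
    monotone_of_deriv_nonneg (fun t => (hasDerivAt_posteriorMean hK hsupp t).differentiableAt)
      fun t => (hasDerivAt_posteriorMean hK hsupp t).deriv ▸ posteriorVar_nonneg hK hsupp t
  refine Monotone.convexOn_univ_of_deriv (fun t => (hderiv t).differentiableAt) ?_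
  rwa [funext fun t => (hderiv t).deriv]

end CompactSupport

lemma ConvexOn.add_mul_sub_le_of_hasDerivAt {S : Set ℝ} {f : ℝ → ℝ} {f' x y : ℝ}
    (hf : ConvexOn ℝ S f) (hx : x ∈ S) (hy : y ∈ S) (hd : HasDerivAt f f' x) :
    f x + f' * (y - x) ≤ f y := by
  rcases lt_trichotomy x y with hxy | rfl | hyx
  · have := hf.le_slope_of_hasDerivAt hx hy hxy hd
    rw [slope_def_field, le_div_iff₀ (sub_pos.2 hxy)] at this
    linarith
  · simp
  · have := hf.slope_le_of_hasDerivAt hy hx hyx hd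
    rw [slope_def_field, div_le_iff₀ (sub_pos.2 hyx)] at this
    linarith

theorem stmt_2_general (A : ℝ) (P : Measure ℝ) [IsProbabilityMeasure P]
    (hsupp : ∀ᵐ x ∂P, x ∈ Set.Icc (-A) A)
    (f m v : ℝ → ℝ)
    (hf : ∀ y, f y = ∫ x, stdNormalPdf (y - x) ∂P)
    (hm : ∀ y, m y = (∫ x, x * stdNormalPdf (y - x) ∂P) / f y)
    (hv : ∀ y, v y = (∫ x, x ^ 2 * stdNormalPdf (y - x) ∂P) / f y - (m y) ^ 2) :
    (∀ y, deriv (deriv (fun t => Real.log (f t))) y = v y - 1 ∧ -1 ≤ v y - 1) ∧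
    (∀ y₀ : ℝ, (∀ y, f y ≤ f y₀) →
      ∀ y, Real.log (f y) ≥ Real.log (f y₀) - (y - y₀) ^ 2 / 2) := by
  have hK : IsCompact (Set.Icc (-A) A) := isCompact_Icc
  obtain rfl : f = gaussConv P 1 := funext fun y => by simp [hf, gaussConv]
  obtain rfl : m = posteriorMean P := funext hm
  obtain rfl : v = posteriorVar P := funext fun y => by rw [hv, hm]; rfl
  have hlog := hasDerivAt_log_gaussConv_one hK hsupp (P := P)
  refine ⟨fun y => ⟨?_, by linarith [posteriorVar_nonneg hK hsupp (P := P) y]⟩,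
    fun y₀ hmax y => ?_⟩
  · rw [funext fun t => (hlog t).deriv]
    exact ((hasDerivAt_posteriorMean hK hsupp y).sub (hasDerivAt_id y)).deriv
  · have hlocalMax : IsLocalMax (fun t => Real.log (gaussConv P 1 t)) y₀ :=
      Filter.Eventually.of_forall fun t =>
        Real.log_le_log (gaussConv_one_pos hK hsupp t) (hmax t)
    have hcrit : posteriorMean P y₀ = y₀ := sub_eq_zero.1 (hlocalMax.hasDerivAt_eq_zero (hlog y₀))
    have htangent := (convexOn_log_gaussConv_one_add_sq hK hsupp).add_mul_sub_le_of_hasDerivAt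
      (Set.mem_univ y₀) (Set.mem_univ y) (hasDerivAt_log_gaussConv_one_add_sq hK hsupp y₀)
    rw [hcrit] at htangent
    linear_combination htangent

theorem stmt_2 (A : ℝ) (hA : 0 < A) (P : Measure ℝ) [IsProbabilityMeasure P]
    (hsupp : ∀ᵐ x ∂P, x ∈ Set.Icc (-A) A)
    (f m v : ℝ → ℝ)
    (hf : ∀ y, f y = ∫ x, stdNormalPdf (y - x) ∂P)
    (hm : ∀ y, m y = (∫ x, x * stdNormalPdf (y - x) ∂P) / f y)
    (hv : ∀ y, v y = (∫ x, x ^ 2 * stdNormalPdf (y - x) ∂P) / f y - (m y) ^ 2) :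
    (∀ y, deriv (deriv (fun t => Real.log (f t))) y = v y - 1 ∧ -1 ≤ v y - 1) ∧
    (∀ y₀ : ℝ, (∀ y, f y ≤ f y₀) →
      ∀ y, Real.log (f y) ≥ Real.log (f y₀) - (y - y₀) ^ 2 / 2) :=
  stmt_2_general A P hsupp f m v hf hm hv
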